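/- Let α ∈ (0,1), 1 ≤ p < 1/α, and let W(x,y) = g(x)·g(y) on [0,1]² with g(x) = (1−α)(1−x)^{−α}. Then tail_ρ^{(p)}(W) = ‖W − min{W,1/ρ}‖_p = O(ρ^{(1−pα)/(pα)}·|log ρ|^{1/p}) as ρ → 0⁺. -/

import Mathlib

/-!
Write `u = 1 - x`, `v = 1 - y` and `t = ((1 - α)² ρ)^{1/α}`, so that
`W = (1 - α)² (uv)^{-α}`. The truncation error `W - min W (1/ρ)` vanishes unless `uv ≤ t`, and is
at most `W` there, so its `p`-th power is at most `(1 - α)^{2p} (uv)^{-pα} min(1, t/(uv))`.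
Integrating out `v` costs a constant and leaves `u^{-pα} min(1, t/u)^{1-pα}`, whose integral over
`[0, 1]` is `t^{1-pα} (1/(1-pα) + log(1/t))`: the factor `log(1/t)` is `∫_t^1 du/u`, and it is the
source of the `|log ρ|` in the bound.
-/

open MeasureTheory Set intervalIntegral

theorem intervalIntegral.integral_le_add_of_le_on_Icc {f g h : ℝ → ℝ} {a b c : ℝ}
    (hab : a ≤ b) (hbc : b ≤ c) (hf : IntervalIntegrable f volume a c)
    (hg : IntervalIntegrable g volume a b) (hh : IntervalIntegrable h volume b c)
    (hfg : ∀ x ∈ Icc a b, f x ≤ g x) (hfh : ∀ x ∈ Icc b c, f x ≤ h x) :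
    ∫ x in a..c, f x ≤ (∫ x in a..b, g x) + ∫ x in b..c, h x := by
  have hb : b ∈ uIcc a c := mem_uIcc_of_le hab hbc
  have hfab := hf.mono_set (uIcc_subset_uIcc_left hb)
  have hfbc := hf.mono_set (uIcc_subset_uIcc_right hb)
  rw [← integral_add_adjacent_intervals hfab hfbc]
  exact add_le_add (integral_mono_on hab hfab hg hfg) (integral_mono_on hbc hfbc hh hfh)

theorem intervalIntegrable_rpow_neg_mul_of_abs_le_one {s : ℝ} (hs : s < 1) {m : ℝ → ℝ}
    (hm : Measurable m) (hm1 : ∀ v ∈ Ioc (0:ℝ) 1, |m v| ≤ 1) :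
    IntervalIntegrable (fun v => v ^ (-s) * m v) volume 0 1 := by
  rw [intervalIntegrable_iff_integrableOn_Ioc_of_le zero_le_one]
  exact ((intervalIntegrable_iff_integrableOn_Ioc_of_le zero_le_one).mp
    (intervalIntegrable_rpow' (by linarith))).mul_bdd hm.aestronglyMeasurable
    (ae_restrict_of_forall_mem measurableSet_Ioc hm1)

theorem integral_rpow_neg_of_lt_one {s b : ℝ} (hs : s < 1) :
    ∫ v in (0:ℝ)..b, v ^ (-s) = b ^ (1 - s) / (1 - s) := by
  rw [integral_rpow (Or.inl (by linarith)), Real.zero_rpow (by linarith)]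
  ring_nf

theorem intervalIntegrable_rpow_neg_mul_min_one_div {s r : ℝ} (hs : s < 1) (hr : 0 ≤ r) :
    IntervalIntegrable (fun v => v ^ (-s) * min 1 (r / v)) volume 0 1 :=
  intervalIntegrable_rpow_neg_mul_of_abs_le_one hs (by fun_prop) fun v hv => by
    rw [abs_of_nonneg (le_min zero_le_one (div_nonneg hr hv.1.le))]
    exact min_le_left _ _

theorem integral_rpow_neg_mul_min_one_div_le {s r : ℝ} (hs0 : 0 < s) (hs1 : s < 1)
    (hr : 0 ≤ r) :
    ∫ v in (0:ℝ)..1, v ^ (-s) * min 1 (r / v) ≤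
      (1 / (1 - s) + 1 / s) * min 1 r ^ (1 - s) := by
  have hf := intervalIntegrable_rpow_neg_mul_min_one_div hs1 hr
  have hle : ∀ v ∈ Icc (0:ℝ) 1, v ^ (-s) * min 1 (r / v) ≤ v ^ (-s) := fun v hv =>
    mul_le_of_le_one_right (Real.rpow_nonneg hv.1 _) (min_le_left _ _)
  rcases le_or_gt 1 r with hr1 | hr1
  · calc ∫ v in (0:ℝ)..1, v ^ (-s) * min 1 (r / v)
        ≤ ∫ v in (0:ℝ)..1, v ^ (-s) :=
          integral_mono_on zero_le_one hf (intervalIntegrable_rpow' (by linarith)) hle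
      _ ≤ (1 / (1 - s) + 1 / s) * min 1 r ^ (1 - s) := by
          rw [integral_rpow_neg_of_lt_one hs1, min_eq_left hr1]
          simp only [Real.one_rpow, mul_one, one_div]
          have : 0 < s⁻¹ := inv_pos.mpr hs0
          linarith
  rcases hr.eq_or_lt with rfl | hr0
  · simp [Real.zero_rpow (sub_pos.mpr hs1).ne']
  have h_tail : ∀ v ∈ Icc r 1, v ^ (-s) * min 1 (r / v) ≤ r * v ^ (-s - 1) := fun v hv => by
    have hv0 : 0 < v := hr0.trans_le hv.1
    calc v ^ (-s) * min 1 (r / v) ≤ v ^ (-s) * (r / v) :=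
          mul_le_mul_of_nonneg_left (min_le_right _ _) (Real.rpow_nonneg hv0.le _)
      _ = r * v ^ (-s - 1) := by
          rw [Real.rpow_sub hv0, Real.rpow_one]; ring
  have h0 : (0:ℝ) ∉ uIcc r 1 := fun h => (lt_min hr0 one_pos).not_ge h.1
  calc ∫ v in (0:ℝ)..1, v ^ (-s) * min 1 (r / v)
      ≤ (∫ v in (0:ℝ)..r, v ^ (-s)) + ∫ v in r..1, r * v ^ (-s - 1) :=
        integral_le_add_of_le_on_Icc hr hr1.le hf (intervalIntegrable_rpow' (by linarith))
          ((intervalIntegrable_rpow (Or.inr h0)).const_mul r)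
          (fun v hv => hle v ⟨hv.1, hv.2.trans hr1.le⟩) h_tail
    _ = r ^ (1 - s) / (1 - s) + (r ^ (1 - s) - r) / s := by
        rw [integral_rpow_neg_of_lt_one hs1, intervalIntegral.integral_const_mul,
          integral_rpow (Or.inr ⟨by linarith, h0⟩), sub_add_cancel, Real.one_rpow,
          sub_eq_add_neg 1 s, Real.rpow_add hr0, Real.rpow_one]
        field_simp
        ring
    _ ≤ (1 / (1 - s) + 1 / s) * min 1 r ^ (1 - s) := by
        rw [min_eq_right hr1.le, add_mul, one_div_mul_eq_div, one_div_mul_eq_div]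
        gcongr
        linarith

theorem min_one_div_rpow_le_one {s t u : ℝ} (hs : s < 1) (ht : 0 ≤ t) (hu : 0 ≤ u) :
    min 1 (t / u) ^ (1 - s) ≤ 1 :=
  Real.rpow_le_one (le_min zero_le_one (div_nonneg ht hu)) (min_le_left _ _) (by linarith)

theorem intervalIntegrable_rpow_neg_mul_min_one_div_rpow {s t : ℝ} (hs : s < 1) (ht : 0 ≤ t) :
    IntervalIntegrable (fun u => u ^ (-s) * min 1 (t / u) ^ (1 - s)) volume 0 1 :=
  intervalIntegrable_rpow_neg_mul_of_abs_le_one hs (by fun_prop) fun u hu => by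
    rw [abs_of_nonneg (Real.rpow_nonneg (le_min zero_le_one (div_nonneg ht hu.1.le)) _)]
    exact min_one_div_rpow_le_one hs ht hu.1.le

theorem integral_rpow_neg_mul_min_one_div_rpow_le {s t : ℝ} (hs : s < 1) (ht0 : 0 < t)
    (ht1 : t ≤ 1) :
    ∫ u in (0:ℝ)..1, u ^ (-s) * min 1 (t / u) ^ (1 - s) ≤
      t ^ (1 - s) * (1 / (1 - s) - Real.log t) := by
  have h_head : ∀ u ∈ Icc 0 t, u ^ (-s) * min 1 (t / u) ^ (1 - s) ≤ u ^ (-s) := fun u hu =>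
    mul_le_of_le_one_right (Real.rpow_nonneg hu.1 _) (min_one_div_rpow_le_one hs ht0.le hu.1)
  have h_tail : ∀ u ∈ Icc t 1, u ^ (-s) * min 1 (t / u) ^ (1 - s) ≤ t ^ (1 - s) * u⁻¹ :=
    fun u hu => le_of_eq <| by
      have hu0 : 0 < u := ht0.trans_le hu.1
      rw [min_eq_right ((div_le_one hu0).mpr hu.1), Real.div_rpow ht0.le hu0.le,
        Real.rpow_sub hu0, Real.rpow_one, Real.rpow_neg hu0.le]
      field_simp
  calc ∫ u in (0:ℝ)..1, u ^ (-s) * min 1 (t / u) ^ (1 - s)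
      ≤ (∫ u in (0:ℝ)..t, u ^ (-s)) + ∫ u in t..1, t ^ (1 - s) * u⁻¹ :=
        integral_le_add_of_le_on_Icc ht0.le ht1
          (intervalIntegrable_rpow_neg_mul_min_one_div_rpow hs ht0.le)
          (intervalIntegrable_rpow' (by linarith))
          ((intervalIntegrable_inv (fun u hu => ((lt_min ht0 one_pos).trans_le hu.1).ne')
            continuousOn_id).const_mul _)
          h_head h_tail
    _ = t ^ (1 - s) * (1 / (1 - s) - Real.log t) := by
        rw [integral_rpow_neg_of_lt_one hs, intervalIntegral.integral_const_mul,
          integral_inv_of_pos ht0 one_pos, one_div t, Real.log_inv]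
        ring

theorem setIntegral_Icc_comp_one_sub (f : ℝ → ℝ) :
    ∫ y in Icc (0:ℝ) 1, f (1 - y) = ∫ v in (0:ℝ)..1, f v := by
  rw [integral_Icc_eq_integral_Ioc, ← intervalIntegral.integral_of_le zero_le_one,
    intervalIntegral.integral_comp_sub_left f 1, sub_self, sub_zero]

theorem integrableOn_Icc_comp_one_sub {f : ℝ → ℝ} (hf : IntervalIntegrable f volume 0 1) :
    IntegrableOn (fun y => f (1 - y)) (Icc (0:ℝ) 1) := by
  have h := hf.comp_sub_left 1
  rw [sub_self, sub_zero] at h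
  exact (intervalIntegrable_iff_integrableOn_Icc_of_le zero_le_one).mp h.symm

theorem one_le_rpow_inv_div_of_one_div_lt_mul_rpow_neg {w κ ρ α : ℝ} (hα : 0 < α)
    (hw : 0 ≤ w) (hρ : 0 < ρ) (h : 1 / ρ < κ * w ^ (-α)) :
    1 ≤ (κ * ρ) ^ α⁻¹ / w := by
  have hw0 : 0 < w := hw.lt_of_ne fun hw0 => by
    rw [← hw0, Real.zero_rpow (neg_ne_zero.mpr hα.ne'), mul_zero] at h
    exact (one_div_pos.mpr hρ).not_gt h
  have hwα := Real.rpow_pos_of_pos hw0 α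
  rw [Real.rpow_neg hw, ← div_eq_mul_inv, div_lt_div_iff₀ hρ hwα, one_mul] at h
  rw [one_le_div hw0]
  exact (Real.le_rpow_inv_iff_of_pos hw (by nlinarith) hα).mpr (by linarith)

theorem sub_log_rpow_inv_le_mul_abs_log {a c ρ α : ℝ} (hα : 0 < α) (ha : 0 ≤ a)
    (hρ : 0 < ρ) (hρc : ρ ≤ c) (hρe : ρ ≤ Real.exp (-1)) :
    a - Real.log ((c * ρ) ^ α⁻¹) ≤ (a + 2 / α) * |Real.log ρ| := by
  have hlogρ : Real.log ρ ≤ -1 := (Real.log_le_iff_le_exp hρ).mpr hρe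
  have hc : 0 < c := hρ.trans_le hρc
  rw [Real.log_rpow (mul_pos hc hρ), Real.log_mul hc.ne' hρ.ne',
    abs_of_neg (by linarith)]
  have hlogc : Real.log ρ ≤ Real.log c := Real.log_le_log hρ hρc
  have hlogc' : 2 / α * Real.log ρ ≤ α⁻¹ * (Real.log c + Real.log ρ) := by
    rw [div_eq_mul_inv, mul_comm 2, mul_assoc]
    exact mul_le_mul_of_nonneg_left (by linarith) (inv_nonneg.mpr hα.le)
  have ha' : a ≤ a * -Real.log ρ := le_mul_of_one_le_right ha (by linarith)
  linarith

noncomputable def powerLawDensity (α x : ℝ) : ℝ := (1 - α) * (1 - x) ^ (-α)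

namespace powerLawDensity

theorem abs_mul_sub_min_rpow_le {α p ρ x y : ℝ} (hα : 0 < α) (hp : 0 < p) (hρ : 0 < ρ)
    (hx : x ≤ 1) (hy : y ≤ 1) :
    |powerLawDensity α x * powerLawDensity α y -
        min (powerLawDensity α x * powerLawDensity α y) (1 / ρ)| ^ p ≤
      ((1 - α) ^ 2) ^ p * (1 - x) ^ (-(p * α)) *
        ((1 - y) ^ (-(p * α)) * min 1 (((1 - α) ^ 2 * ρ) ^ α⁻¹ / (1 - x) / (1 - y))) := by
  have hu : 0 ≤ 1 - x := sub_nonneg.mpr hx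
  have hv : 0 ≤ 1 - y := sub_nonneg.mpr hy
  have hW : powerLawDensity α x * powerLawDensity α y =
      (1 - α) ^ 2 * ((1 - x) * (1 - y)) ^ (-α) := by
    rw [powerLawDensity, powerLawDensity, Real.mul_rpow hu hv]; ring
  rw [hW]
  set W := (1 - α) ^ 2 * ((1 - x) * (1 - y)) ^ (-α)
  rcases le_or_gt W (1 / ρ) with hle | hlt
  · rw [min_eq_left hle, sub_self, abs_zero, Real.zero_rpow hp.ne']
    positivity
  have htail : 1 ≤ ((1 - α) ^ 2 * ρ) ^ α⁻¹ / (1 - x) / (1 - y) := by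
    rw [div_div]
    exact one_le_rpow_inv_div_of_one_div_lt_mul_rpow_neg hα (mul_nonneg hu hv) hρ hlt
  rw [min_eq_right hlt.le, min_eq_left htail, mul_one]
  calc |W - 1 / ρ| ^ p ≤ W ^ p := by
        rw [abs_of_nonneg (sub_nonneg.mpr hlt.le)]
        exact Real.rpow_le_rpow (sub_nonneg.mpr hlt.le) (by simp [hρ.le]) hp.le
    _ = _ := by
        rw [Real.mul_rpow (sq_nonneg _) (Real.rpow_nonneg (mul_nonneg hu hv) _),
          ← Real.rpow_mul (mul_nonneg hu hv), Real.mul_rpow hu hv, neg_mul, mul_comm α p]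
        ring

theorem integral_abs_mul_sub_min_rpow_le {α p ρ x : ℝ} (hα : 0 < α) (hp : 0 < p)
    (hpα : p * α < 1) (hρ : 0 < ρ) (hx : x ≤ 1) :
    ∫ y in Icc (0:ℝ) 1, |powerLawDensity α x * powerLawDensity α y -
        min (powerLawDensity α x * powerLawDensity α y) (1 / ρ)| ^ p ≤
      ((1 - α) ^ 2) ^ p * (1 / (1 - p * α) + 1 / (p * α)) *
        ((1 - x) ^ (-(p * α)) *
          min 1 (((1 - α) ^ 2 * ρ) ^ α⁻¹ / (1 - x)) ^ (1 - p * α)) := by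
  set t := ((1 - α) ^ 2 * ρ) ^ α⁻¹
  have hr : 0 ≤ t / (1 - x) :=
    div_nonneg (Real.rpow_nonneg (by positivity) _) (sub_nonneg.mpr hx)
  have hc : 0 ≤ ((1 - α) ^ 2) ^ p * (1 - x) ^ (-(p * α)) :=
    mul_nonneg (Real.rpow_nonneg (sq_nonneg _) _) (Real.rpow_nonneg (sub_nonneg.mpr hx) _)
  calc ∫ y in Icc (0:ℝ) 1, |powerLawDensity α x * powerLawDensity α y -
        min (powerLawDensity α x * powerLawDensity α y) (1 / ρ)| ^ p
      ≤ ∫ y in Icc (0:ℝ) 1, ((1 - α) ^ 2) ^ p * (1 - x) ^ (-(p * α)) *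
          ((1 - y) ^ (-(p * α)) * min 1 (t / (1 - x) / (1 - y))) :=
        integral_mono_of_nonneg (.of_forall fun y => by positivity)
          ((integrableOn_Icc_comp_one_sub
            (intervalIntegrable_rpow_neg_mul_min_one_div hpα hr)).const_mul _)
          (ae_restrict_of_forall_mem measurableSet_Icc fun y hy =>
            abs_mul_sub_min_rpow_le hα hp hρ hx hy.2)
    _ = ((1 - α) ^ 2) ^ p * (1 - x) ^ (-(p * α)) *
          ∫ v in (0:ℝ)..1, v ^ (-(p * α)) * min 1 (t / (1 - x) / v) := by
        rw [MeasureTheory.integral_const_mul, setIntegral_Icc_comp_one_sub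
          fun v => v ^ (-(p * α)) * min 1 (t / (1 - x) / v)]
    _ ≤ ((1 - α) ^ 2) ^ p * (1 - x) ^ (-(p * α)) *
          ((1 / (1 - p * α) + 1 / (p * α)) * min 1 (t / (1 - x)) ^ (1 - p * α)) :=
        mul_le_mul_of_nonneg_left
          (integral_rpow_neg_mul_min_one_div_le (mul_pos hp hα) hpα hr) hc
    _ = _ := by ring

theorem integral_integral_abs_mul_sub_min_rpow_le {α p ρ : ℝ} (hα : 0 < α) (hα1 : α < 1)
    (hp : 0 < p) (hpα : p * α < 1) (hρ : 0 < ρ) (hρ1 : (1 - α) ^ 2 * ρ ≤ 1) :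
    ∫ x in Icc (0:ℝ) 1, ∫ y in Icc (0:ℝ) 1, |powerLawDensity α x * powerLawDensity α y -
        min (powerLawDensity α x * powerLawDensity α y) (1 / ρ)| ^ p ≤
      ((1 - α) ^ 2) ^ p * (1 / (1 - p * α) + 1 / (p * α)) *
        ((((1 - α) ^ 2 * ρ) ^ α⁻¹) ^ (1 - p * α) *
          (1 / (1 - p * α) - Real.log (((1 - α) ^ 2 * ρ) ^ α⁻¹))) := by
  set t := ((1 - α) ^ 2 * ρ) ^ α⁻¹
  have ht0 : 0 < t := Real.rpow_pos_of_pos (mul_pos (pow_pos (sub_pos.mpr hα1) 2) hρ) _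
  have ht1 : t ≤ 1 := Real.rpow_le_one (by positivity) hρ1 (by positivity)
  have hK : 0 ≤ ((1 - α) ^ 2) ^ p * (1 / (1 - p * α) + 1 / (p * α)) :=
    mul_nonneg (Real.rpow_nonneg (sq_nonneg _) _)
      (add_nonneg (one_div_nonneg.mpr (by linarith)) (by positivity))
  calc ∫ x in Icc (0:ℝ) 1, ∫ y in Icc (0:ℝ) 1,
        |powerLawDensity α x * powerLawDensity α y -
          min (powerLawDensity α x * powerLawDensity α y) (1 / ρ)| ^ p
      ≤ ∫ x in Icc (0:ℝ) 1, ((1 - α) ^ 2) ^ p * (1 / (1 - p * α) + 1 / (p * α)) *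
          ((1 - x) ^ (-(p * α)) * min 1 (t / (1 - x)) ^ (1 - p * α)) :=
        integral_mono_of_nonneg (.of_forall fun x => integral_nonneg fun y => by positivity)
          ((integrableOn_Icc_comp_one_sub
            (intervalIntegrable_rpow_neg_mul_min_one_div_rpow hpα ht0.le)).const_mul _)
          (ae_restrict_of_forall_mem measurableSet_Icc fun x hx =>
            integral_abs_mul_sub_min_rpow_le hα hp hpα hρ hx.2)
    _ = ((1 - α) ^ 2) ^ p * (1 / (1 - p * α) + 1 / (p * α)) *
          ∫ u in (0:ℝ)..1, u ^ (-(p * α)) * min 1 (t / u) ^ (1 - p * α) := by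
        rw [MeasureTheory.integral_const_mul, setIntegral_Icc_comp_one_sub
          fun u => u ^ (-(p * α)) * min 1 (t / u) ^ (1 - p * α)]
    _ ≤ _ :=
        mul_le_mul_of_nonneg_left (integral_rpow_neg_mul_min_one_div_rpow_le hpα ht0 ht1) hK

theorem integral_integral_abs_mul_sub_min_rpow_le_mul_abs_log {α p ρ : ℝ} (hα : 0 < α)
    (hα1 : α < 1) (hp : 0 < p) (hpα : p * α < 1) (hρ : 0 < ρ) (hρc : ρ ≤ (1 - α) ^ 2)
    (hρe : ρ ≤ Real.exp (-1)) :
    ∫ x in Icc (0:ℝ) 1, ∫ y in Icc (0:ℝ) 1, |powerLawDensity α x * powerLawDensity α y -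
        min (powerLawDensity α x * powerLawDensity α y) (1 / ρ)| ^ p ≤
      ((1 - α) ^ 2) ^ p * (1 / (1 - p * α) + 1 / (p * α)) * (1 / (1 - p * α) + 2 / α) *
        (ρ ^ ((1 - p * α) / α) * |Real.log ρ|) := by
  have hs : 0 < 1 - p * α := by linarith
  have hcρ : (1 - α) ^ 2 * ρ ≤ ρ :=
    mul_le_of_le_one_left hρ.le (pow_le_one₀ (by linarith) (by linarith))
  have ht : (((1 - α) ^ 2 * ρ) ^ α⁻¹) ^ (1 - p * α) ≤ ρ ^ ((1 - p * α) / α) := by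
    rw [← Real.rpow_mul (by positivity), inv_mul_eq_div]
    exact Real.rpow_le_rpow (by positivity) hcρ (by positivity)
  have hlog := sub_log_rpow_inv_le_mul_abs_log (a := 1 / (1 - p * α)) hα (by positivity) hρ
    hρc hρe
  have hcρ1 : (1 - α) ^ 2 * ρ ≤ 1 :=
    hcρ.trans (hρe.trans (Real.exp_le_one_iff.mpr (by norm_num)))
  refine (integral_integral_abs_mul_sub_min_rpow_le hα hα1 hp hpα hρ hcρ1).trans <|
    (mul_le_mul_of_nonneg_left ((mul_le_mul_of_nonneg_left hlog (by positivity)).trans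
      (mul_le_mul_of_nonneg_right ht (by positivity))) (by positivity)).trans_eq (by ring)

end powerLawDensity

/-- Tail bound for the power-law graphon `W(x,y) = g(x)g(y)` with
`g(x) = (1-α)(1-x)^{-α}`:
`tail_ρ^{(p)}(W) = O(ρ^{(1-pα)/(pα)} |log ρ|^{1/p})` as `ρ → 0⁺`. -/
theorem powerlaw_product_tail_bound
    (α p : ℝ) (hα0 : 0 < α) (hα1 : α < 1) (hp : 1 ≤ p) (hpα : p < 1/α) :
    ∃ C₀ ρ₀ : ℝ, 0 < C₀ ∧ 0 < ρ₀ ∧ ∀ ρ : ℝ, 0 < ρ → ρ ≤ ρ₀ →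
      (∫ x in Icc (0:ℝ) 1, ∫ y in Icc (0:ℝ) 1,
        |((1 - α) * (1 - x) ^ (-α)) * ((1 - α) * (1 - y) ^ (-α)) -
          min (((1 - α) * (1 - x) ^ (-α)) * ((1 - α) * (1 - y) ^ (-α))) (1/ρ)| ^ p)
        ^ (1/p) ≤
      C₀ * ρ ^ ((1 - p * α) / (p * α)) * |Real.log ρ| ^ (1/p) := by
  have hp0 : 0 < p := one_pos.trans_le hp
  have hpα1 : p * α < 1 := (lt_div_iff₀ hα0).mp hpα
  have hs : 0 < 1 - p * α := by linarith
  have hc : 0 < (1 - α) ^ 2 := pow_pos (sub_pos.mpr hα1) 2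
  set K := ((1 - α) ^ 2) ^ p * (1 / (1 - p * α) + 1 / (p * α)) * (1 / (1 - p * α) + 2 / α)
  have hK : 0 < K := by positivity
  refine ⟨K ^ (1 / p), min ((1 - α) ^ 2) (Real.exp (-1)), by positivity,
    lt_min hc (Real.exp_pos _), fun ρ hρ hρ₀ => ?_⟩
  have hbound := powerLawDensity.integral_integral_abs_mul_sub_min_rpow_le_mul_abs_log
    hα0 hα1 hp0 hpα1 hρ (hρ₀.trans (min_le_left _ _)) (hρ₀.trans (min_le_right _ _))
  refine (Real.rpow_le_rpow (integral_nonneg fun x => integral_nonneg fun y => by positivity)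
    hbound (by positivity)).trans_eq ?_
  rw [Real.mul_rpow hK.le (by positivity), Real.mul_rpow (by positivity) (abs_nonneg _),
    ← Real.rpow_mul hρ.le, div_mul_div_comm, mul_one, mul_comm α p, mul_assoc]
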